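/- Let c = x + y where x ∈ Û (a subspace with orthonormal basis matrix Û) and y ∈ Û^⊥, and let ĉ = Û(Û_Ω^T Û_Ω)^{-1} Û_Ω^T c_Ω. If ||(Û_Ω^T Û_Ω)^{-1}||₂ ≤ n/((1−γ)m) and ||Û_Ω^T y_Ω||₂² ≤ β (m/n)(rμ(Û)/n) ||y||₂², then ||c − ĉ||² ≤ (1 + rμ(Û)β/(m(1−γ)²)) ||y||₂². -/

import Mathlib

/-! Write `ĉ = x + Û w` with `w = (Û_Ωᵀ Û_Ω)⁻¹ Û_Ωᵀ y_Ω`, so that `c - ĉ = y - Û w`. Since `Û w` lies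
in the column span of `Û`, to which `y` is orthogonal, and `Û` is an isometry, Pythagoras gives
`‖c - ĉ‖² = ‖y‖² + ‖w‖²`; the two hypotheses bound `‖w‖²` by `r μ(Û) β / (m (1 - γ)²) ‖y‖²`. -/

open Matrix

noncomputable def coh {ι : Type*} [Fintype ι] [DecidableEq ι]
    (U : Submodule ℝ (EuclideanSpace ℝ ι)) : ℝ :=
  ((Fintype.card ι : ℝ) / (Module.finrank ℝ U : ℝ)) *
    ⨆ j : ι, ‖(U.orthogonalProjection (EuclideanSpace.single j 1) : EuclideanSpace ℝ ι)‖ ^ 2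

def colspan {n d : ℕ} (U : Matrix (Fin n) (Fin d) ℝ) :
    Submodule ℝ (EuclideanSpace ℝ (Fin n)) :=
  Submodule.span ℝ (Set.range fun j => (WithLp.toLp 2 (fun i => U i j) : EuclideanSpace ℝ (Fin n)))

theorem Matrix.sum_sq_mulVec_of_transpose_mul_self_eq_one {R m n : Type*} [CommSemiring R]
    [Fintype m] [Fintype n] [DecidableEq n] {U : Matrix m n R} (hU : Uᵀ * U = 1) (w : n → R) :
    ∑ i, (U *ᵥ w) i ^ 2 = ∑ j, w j ^ 2 := by
  have h : (U *ᵥ w) ⬝ᵥ (U *ᵥ w) = w ⬝ᵥ w := by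
    rw [dotProduct_mulVec, ← mulVec_transpose, mulVec_mulVec, hU, one_mulVec]
  simpa only [dotProduct, sq] using h

theorem toLp_mulVec_mem_colspan {n d : ℕ} (U : Matrix (Fin n) (Fin d) ℝ) (w : Fin d → ℝ) :
    WithLp.toLp 2 (U *ᵥ w) ∈ colspan U := by
  have h : WithLp.toLp 2 (U *ᵥ w) =
      ∑ j, w j • (WithLp.toLp 2 (fun i => U i j) : EuclideanSpace ℝ (Fin n)) := by
    ext i
    simp [mulVec, dotProduct, mul_comm]
  rw [h]
  exact Submodule.sum_mem _ fun j _ => Submodule.smul_mem _ _ (Submodule.subset_span ⟨j, rfl⟩)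

theorem sum_sq_sub_mulVec_of_mem_orthogonal_colspan {n d : ℕ} {U : Matrix (Fin n) (Fin d) ℝ}
    (hU : Uᵀ * U = 1) {y : EuclideanSpace ℝ (Fin n)} (hy : y ∈ (colspan U)ᗮ) (w : Fin d → ℝ) :
    ∑ i, (y i - (U *ᵥ w) i) ^ 2 = ‖y‖ ^ 2 + ∑ j, w j ^ 2 := by
  have horth : inner ℝ y (WithLp.toLp 2 (U *ᵥ w)) = 0 :=
    Submodule.inner_left_of_mem_orthogonal (toLp_mulVec_mem_colspan U w) hy
  calc ∑ i, (y i - (U *ᵥ w) i) ^ 2 = ‖y - WithLp.toLp 2 (U *ᵥ w)‖ ^ 2 := by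
        rw [EuclideanSpace.real_norm_sq_eq]; rfl
    _ = ‖y‖ ^ 2 + ‖WithLp.toLp 2 (U *ᵥ w)‖ ^ 2 := by rw [norm_sub_sq_real, horth]; ring
    _ = ‖y‖ ^ 2 + ∑ j, w j ^ 2 := by
        rw [EuclideanSpace.real_norm_sq_eq (WithLp.toLp 2 (U *ᵥ w)), WithLp.ofLp_toLp,
          U.sum_sq_mulVec_of_transpose_mul_self_eq_one hU w]

theorem coh_eq_zero_of_isEmpty {ι : Type*} [Fintype ι] [DecidableEq ι] [IsEmpty ι]
    (U : Submodule ℝ (EuclideanSpace ℝ ι)) : coh U = 0 := by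
  simp [coh]

theorem sq_div_mul_mul_div_mul_div {N M a β s : ℝ} (hN : N ≠ 0) :
    (N / (a * M)) ^ 2 * (β * (M / N) * (s / N)) = s * β / (M * a ^ 2) := by
  rcases eq_or_ne M 0 with rfl | hM
  · simp
  rcases eq_or_ne a 0 with rfl | ha
  · simp
  field_simp

theorem noisy_reconstruction_error_general {n r m : ℕ}
    (Uh : Matrix (Fin n) (Fin r) ℝ) (hU : Uhᵀ * Uh = 1)
    (ω : Fin m → Fin n) (UΩ : Matrix (Fin m) (Fin r) ℝ)
    (c x y : EuclideanSpace ℝ (Fin n)) (hc : c = x + y)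
    (hy : y ∈ (colspan Uh)ᗮ)
    (β γ : ℝ)
    (hxrec : Uh.mulVec ((UΩᵀ * UΩ)⁻¹.mulVec (UΩᵀ.mulVec fun i => x (ω i))) = x)
    (hop : ∀ z : Fin r → ℝ, ∑ j, ((UΩᵀ * UΩ)⁻¹.mulVec z j) ^ 2 ≤
      ((n : ℝ) / ((1 - γ) * m)) ^ 2 * ∑ j, (z j) ^ 2)
    (hUy : ∑ j, (UΩᵀ.mulVec (fun i => y (ω i)) j) ^ 2 ≤
      β * (m / n) * ((r : ℝ) * coh (colspan Uh) / n) * ‖y‖ ^ 2) :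
    ∑ i, (c i - Uh.mulVec ((UΩᵀ * UΩ)⁻¹.mulVec (UΩᵀ.mulVec fun i' => c (ω i'))) i) ^ 2 ≤
      (1 + (r : ℝ) * coh (colspan Uh) * β / (m * (1 - γ) ^ 2)) * ‖y‖ ^ 2 := by
  set w := (UΩᵀ * UΩ)⁻¹ *ᵥ (UΩᵀ *ᵥ fun i => y (ω i))
  have hĉ : Uh *ᵥ ((UΩᵀ * UΩ)⁻¹ *ᵥ (UΩᵀ *ᵥ fun i => c (ω i))) = x + Uh *ᵥ w := by
    have hsample : (fun i => c (ω i)) = (fun i => x (ω i)) + fun i => y (ω i) := by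
      ext i; simp [hc]
    rw [hsample, mulVec_add, mulVec_add, mulVec_add, hxrec]
  have hresidual : ∑ i, (c i - (x + Uh *ᵥ w) i) ^ 2 = ‖y‖ ^ 2 + ∑ j, w j ^ 2 := by
    rw [← sum_sq_sub_mulVec_of_mem_orthogonal_colspan hU hy w]
    simp [hc]
  have hconst : ((n : ℝ) / ((1 - γ) * m)) ^ 2 * (β * (m / n) * ((r : ℝ) * coh (colspan Uh) / n)) =
      r * coh (colspan Uh) * β / (m * (1 - γ) ^ 2) := by
    -- for `n = 0` the divisions by `n` are junk, but then `coh` vanishes as well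
    rcases eq_or_ne n 0 with rfl | hn
    · simp [coh_eq_zero_of_isEmpty]
    · exact sq_div_mul_mul_div_mul_div (Nat.cast_ne_zero.mpr hn)
  have hw : ∑ j, w j ^ 2 ≤ r * coh (colspan Uh) * β / (m * (1 - γ) ^ 2) * ‖y‖ ^ 2 :=
    calc ∑ j, w j ^ 2
        ≤ ((n : ℝ) / ((1 - γ) * m)) ^ 2 * ∑ j, (UΩᵀ *ᵥ (fun i => y (ω i))) j ^ 2 := hop _
      _ ≤ ((n : ℝ) / ((1 - γ) * m)) ^ 2 *
          (β * (m / n) * ((r : ℝ) * coh (colspan Uh) / n) * ‖y‖ ^ 2) := by gcongr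
      _ = r * coh (colspan Uh) * β / (m * (1 - γ) ^ 2) * ‖y‖ ^ 2 := by rw [← hconst]; ring
  rw [hĉ, hresidual]
  linarith

/-- let `c = x + y` with `x` in the column span of the orthonormal
basis matrix `Û` and `y` orthogonal to it, and `ĉ = Û(Û_Ωᵀ Û_Ω)⁻¹ Û_Ωᵀ c_Ω`. If
`‖(Û_Ωᵀ Û_Ω)⁻¹‖₂ ≤ n/((1−γ)m)` (as an operator bound) and
`‖Û_Ωᵀ y_Ω‖² ≤ β (m/n)(r μ(Û)/n) ‖y‖²`, then
`‖c − ĉ‖² ≤ (1 + r μ(Û) β/(m(1−γ)²)) ‖y‖²`. -/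
theorem noisy_reconstruction_error {n r m : ℕ}
    (Uh : Matrix (Fin n) (Fin r) ℝ) (hU : Uhᵀ * Uh = 1)
    (ω : Fin m → Fin n) (UΩ : Matrix (Fin m) (Fin r) ℝ)
    (hUΩ : UΩ = Uh.submatrix ω id)
    (c x y : EuclideanSpace ℝ (Fin n)) (hc : c = x + y)
    (hx : x ∈ colspan Uh) (hy : y ∈ (colspan Uh)ᗮ)
    (β γ : ℝ) (hβ : 0 < β) (hγ0 : 0 < γ) (hγ1 : γ < 1)
    (hxrec : Uh.mulVec ((UΩᵀ * UΩ)⁻¹.mulVec (UΩᵀ.mulVec fun i => x (ω i))) = x)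
    (hop : ∀ z : Fin r → ℝ, ∑ j, ((UΩᵀ * UΩ)⁻¹.mulVec z j) ^ 2 ≤
      ((n : ℝ) / ((1 - γ) * m)) ^ 2 * ∑ j, (z j) ^ 2)
    (hUy : ∑ j, (UΩᵀ.mulVec (fun i => y (ω i)) j) ^ 2 ≤
      β * (m / n) * ((r : ℝ) * coh (colspan Uh) / n) * ‖y‖ ^ 2) :
    ∑ i, (c i - Uh.mulVec ((UΩᵀ * UΩ)⁻¹.mulVec (UΩᵀ.mulVec fun i' => c (ω i'))) i) ^ 2 ≤
      (1 + (r : ℝ) * coh (colspan Uh) * β / (m * (1 - γ) ^ 2)) * ‖y‖ ^ 2 :=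
  noisy_reconstruction_error_general Uh hU ω UΩ c x y hc hy β γ hxrec hop hUy
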